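/- arXiv:2508.19201 — 6 statements merged into one kernel-verified Lean document; each statement's English description precedes it below -/
import Mathlib

section
/- The largest real number λ with the following property — for all positive real numbers p, q, r, s there exists a complex number z such that |Im z| ≥ λ·|Re z| and (p·z³ + 2q·z² + 2r·z + s)·(q·z³ + 2p·z² + 2s·z + r) = 0 — is √3. That is, √3 is the greatest element of the set of real numbers λ such that for every choice of positive reals p, q, r, s some complex root z of the product polynomial satisfies |Im z| ≥ λ·|Re z|. -/
open Complex


lemma exists_real_root (p q r s : ℝ) (hp : 0 < p) (hq : 0 < q) (hr : 0 < r) (hs : 0 < s) :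
    ∃ α : ℝ, α < 0 ∧ p * α ^ 3 + 2 * q * α ^ 2 + 2 * r * α + s = 0 := by
  set f : ℝ → ℝ := fun x => p * x ^ 3 + 2 * q * x ^ 2 + 2 * r * x + s with hf
  have hcont : Continuous f := by fun_prop
  set M : ℝ := (2 * q + 2 * r + s) / p + 1 with hM
  have hM1 : 1 ≤ M := by
    rw [hM]
    have : 0 < (2 * q + 2 * r + s) / p := by positivity
    linarith
  have hM2 : 1 ≤ M ^ 2 := by nlinarith
  have hpM : p * M = 2 * q + 2 * r + s + p := by
    rw [hM]; field_simp
  have key : p * M ^ 3 = (2 * q + 2 * r + s + p) * M ^ 2 := by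
    calc p * M ^ 3 = (p * M) * M ^ 2 := by ring
    _ = (2 * q + 2 * r + s + p) * M ^ 2 := by rw [hpM]
  have hfM : f (-M) < 0 := by
    show p * (-M) ^ 3 + 2 * q * (-M) ^ 2 + 2 * r * (-M) + s < 0
    nlinarith [key, hM2, hM1]
  have hf0 : 0 < f 0 := by
    show 0 < p * 0 ^ 3 + 2 * q * 0 ^ 2 + 2 * r * 0 + s
    nlinarith
  have hsub := intermediate_value_Icc (by linarith : (-M : ℝ) ≤ 0) hcont.continuousOn
  have h0mem : (0:ℝ) ∈ Set.Icc (f (-M)) (f 0) := ⟨hfM.le, hf0.le⟩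
  obtain ⟨α, hαmem, hα⟩ := hsub h0mem
  refine ⟨α, ?_, hα⟩
  by_contra h
  push_neg at h
  have : 0 < f α := by
    show 0 < p * α ^ 3 + 2 * q * α ^ 2 + 2 * r * α + s
    positivity
  rw [hα] at this; exact lt_irrefl 0 this

set_option maxHeartbeats 1000000 in
lemma key (p q r s : ℝ) (hp : 0 < p) (hq : 0 < q) (hr : 0 < r) (hs : 0 < s) :
    (∃ z : ℂ, |z.im| ≥ Real.sqrt 3 * |z.re| ∧
      (p : ℂ) * z ^ 3 + 2 * (q : ℂ) * z ^ 2 + 2 * (r : ℂ) * z + (s : ℂ) = 0) ∨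
    (∃ A m X : ℝ, 0 < A ∧ 0 < m ∧ 0 < X ∧ X < m ^ 2 ∧
      p * (A + m) = 2 * q ∧ p * (A * m + X) = 2 * r ∧ p * (A * X) = s) := by
  obtain ⟨α, hα, hroot⟩ := exists_real_root p q r s hp hq hr hs
  obtain ⟨b, hbdef⟩ : ∃ b : ℝ, b = α + 2 * q / p := ⟨_, rfl⟩
  obtain ⟨c, hcdef⟩ : ∃ c : ℝ, c = α ^ 2 + 2 * q / p * α + 2 * r / p := ⟨_, rfl⟩
  have hp' : (p : ℝ) ≠ 0 := hp.ne'
  have hpb : p * b = p * α + 2 * q := by rw [hbdef]; field_simp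
  have hpc : p * c = p * α ^ 2 + 2 * q * α + 2 * r := by rw [hcdef]; field_simp
  have hpac : p * (α * c) = -s := by
    linear_combination α * hpc + hroot
  have hc0 : 0 < c := by
    rcases le_or_gt c 0 with h | h
    · exfalso
      have h1 : 0 ≤ α * c := by nlinarith [mul_nonneg (neg_nonneg.mpr hα.le) (neg_nonneg.mpr h)]
      nlinarith
    · exact h
  -- complex casts
  have hpbC : (p : ℂ) * (b : ℂ) = (p : ℂ) * (α : ℂ) + 2 * (q : ℂ) := by
    exact_mod_cast congrArg (fun t : ℝ => (t : ℂ)) hpb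
  have hpcC : (p : ℂ) * (c : ℂ) = (p : ℂ) * (α : ℂ) ^ 2 + 2 * (q : ℂ) * (α : ℂ) + 2 * (r : ℂ) := by
    exact_mod_cast congrArg (fun t : ℝ => (t : ℂ)) hpc
  have hpacC : (p : ℂ) * ((α : ℂ) * (c : ℂ)) = -(s : ℂ) := by
    exact_mod_cast congrArg (fun t : ℝ => (t : ℂ)) hpac
  have hfac : ∀ z : ℂ, (p : ℂ) * z ^ 3 + 2 * (q : ℂ) * z ^ 2 + 2 * (r : ℂ) * z + (s : ℂ)
      = (p : ℂ) * (z - (α : ℂ)) * (z ^ 2 + (b : ℂ) * z + (c : ℂ)) := by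
    intro z
    linear_combination ((α : ℂ) * z - z ^ 2) * hpbC - z * hpcC + hpacC
  have e2' : p * c - α * (p * b) = 2 * r := by linear_combination hpc - α * hpb
  rcases lt_or_ge (b ^ 2) (4 * c) with hD | hD
  · -- complex conjugate pair
    obtain ⟨y, hydef⟩ : ∃ y : ℝ, y = Real.sqrt (c - b ^ 2 / 4) := ⟨_, rfl⟩
    have hy2 : y ^ 2 = c - b ^ 2 / 4 := by rw [hydef]; exact Real.sq_sqrt (by linarith)
    have hy0 : 0 < y := by rw [hydef]; exact Real.sqrt_pos.mpr (by linarith)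
    obtain ⟨x, hxdef⟩ : ∃ x : ℝ, x = -b / 2 := ⟨_, rfl⟩
    obtain ⟨z, hzdef⟩ : ∃ z : ℂ, z = (x : ℂ) + (y : ℂ) * I := ⟨_, rfl⟩
    have hzre : z.re = x := by simp [hzdef]
    have hzim : z.im = y := by simp [hzdef]
    have hxC : (x : ℂ) = -(b : ℂ) / 2 := by rw [hxdef]; push_cast; ring
    have hy2C : (y : ℂ) ^ 2 = (c : ℂ) - (b : ℂ) ^ 2 / 4 := by
      exact_mod_cast congrArg (fun t : ℝ => (t : ℂ)) hy2
    have hquad : z ^ 2 + (b : ℂ) * z + (c : ℂ) = 0 := by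
      rw [hzdef, hxC]
      linear_combination (y : ℂ) ^ 2 * Complex.I_sq - hy2C
    have hrootz : (p : ℂ) * z ^ 3 + 2 * (q : ℂ) * z ^ 2 + 2 * (r : ℂ) * z + (s : ℂ) = 0 := by
      rw [hfac z, hquad, mul_zero]
    have e1 : p * (α + 2 * x) = -(2 * q) := by rw [hxdef]; linear_combination -hpb
    have e2 : p * (c + 2 * α * x) = 2 * r := by rw [hxdef]; linear_combination e2'
    have hXc : x ^ 2 + y ^ 2 = c := by rw [hxdef]; linear_combination hy2
    by_cases hgood : 3 * x ^ 2 ≤ y ^ 2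
    · left
      refine ⟨z, ?_, hrootz⟩
      rw [hzre, hzim, ge_iff_le, abs_of_pos hy0]
      have h1 : (Real.sqrt 3 * |x|) ^ 2 ≤ y ^ 2 := by
        rw [mul_pow, Real.sq_sqrt (by norm_num : (0:ℝ) ≤ 3), _root_.sq_abs]; linarith
      have h2 := Real.sqrt_le_sqrt h1
      rwa [Real.sqrt_sq (by positivity), Real.sqrt_sq hy0.le] at h2
    · push_neg at hgood
      have h2 : 0 < c + 2 * α * x := by nlinarith [mul_pos hp hr]
      have h3 : α + 2 * x < 0 := by nlinarith [mul_pos hp hq]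
      have hx0 : x < 0 := by
        rcases lt_trichotomy x 0 with h | h | h
        · exact h
        · exfalso; rw [h] at hgood; nlinarith
        · exfalso
          nlinarith [mul_lt_mul_of_pos_right h3 h, h2, hXc, hgood]
      right
      refine ⟨-α, -2 * x, c, by linarith, by linarith, hc0, ?_, ?_, ?_, ?_⟩
      · nlinarith [hgood, hXc]
      · linear_combination -e1
      · linear_combination e2
      · linear_combination -hpac
  · -- all real roots
    have hb0 : 0 < b := by
      by_contra hble
      push_neg at hble
      have key3 : p ^ 2 * c = p ^ 2 * b ^ 2 - 2 * q * (p * b) + 2 * p * r := by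
        linear_combination p * hpc - (p * b + p * α) * hpb
      have h1 : 0 ≤ 2 * q * (p * (-b)) :=
        mul_nonneg (by positivity) (mul_nonneg hp.le (by linarith))
      nlinarith [key3, hD, hc0, h1, mul_pos hp hr,
        mul_le_mul_of_nonneg_left hD (sq_nonneg p), mul_pos (mul_pos hp hp) hc0]
    right
    refine ⟨-α, b, c, by linarith, hb0, hc0, by nlinarith, ?_, ?_, ?_⟩
    · linear_combination hpb
    · linear_combination e2'
    · linear_combination -hpac


lemma pure_ineq (A m X B n U : ℝ) (hA : 0 < A) (hm : 0 < m) (hX : 0 < X)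
    (hB : 0 < B) (hn : 0 < n) (hU : 0 < U) (hXm : X < m ^ 2) (hUn : U < n ^ 2)
    (e1 : (A + m) * (B + n) = 4) (e2 : (A * m + X) * (B * n + U) = 4 * (A * B * X * U)) :
    False := by
  have k1 : 4 * (A * m * X) ≤ (A * m + X) ^ 2 := by nlinarith [sq_nonneg (A * m - X)]
  have k2 : 4 * (B * n * U) ≤ (B * n + U) ^ 2 := by nlinarith [sq_nonneg (B * n - U)]
  have pos1 : 0 < A * m + X := by positivity
  have pos2 : 0 < B * n + U := by positivity
  have k3 : 16 * (A * m * X) * (B * n * U) ≤ 16 * (A * B * X * U) ^ 2 := by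
    calc 16 * (A * m * X) * (B * n * U) ≤ (A * m + X) ^ 2 * (B * n + U) ^ 2 := by
          nlinarith [mul_le_mul k1 k2 (by positivity) (sq_nonneg (A * m + X))]
      _ = ((A * m + X) * (B * n + U)) ^ 2 := by ring
      _ = 16 * (A * B * X * U) ^ 2 := by rw [e2]; ring
  have habxu : 0 < A * B * X * U := by positivity
  have k4 : m * n ≤ A * B * X * U := by nlinarith [habxu]
  have k6 : 1 < A * B * m * n := by
    have h1 : A * B * X * U < A * B * (m ^ 2) * (n ^ 2) := by
      have := mul_pos hA hB
      nlinarith [mul_pos (mul_pos hA hB) (mul_pos hX hn), mul_pos hX hU]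
    have h2 : m * n < A * B * m ^ 2 * n ^ 2 := lt_of_le_of_lt k4 h1
    have hmn : 0 < m * n := mul_pos hm hn
    nlinarith [h2, hmn]
  have k7 : A * B * m * n ≤ 1 := by
    have a1 : 4 * (A * m) ≤ (A + m) ^ 2 := by nlinarith [sq_nonneg (A - m)]
    have a2 : 4 * (B * n) ≤ (B + n) ^ 2 := by nlinarith [sq_nonneg (B - n)]
    have c1 : (4 * (A * m)) * (4 * (B * n)) ≤ (A + m) ^ 2 * (B + n) ^ 2 :=
      mul_le_mul a1 a2 (by positivity) (sq_nonneg _)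
    have c2 : (A + m) ^ 2 * (B + n) ^ 2 = 16 := by
      calc (A + m) ^ 2 * (B + n) ^ 2 = ((A + m) * (B + n)) ^ 2 := by ring
        _ = 16 := by rw [e1]; norm_num
    have c3 : 16 * (A * B * m * n) ≤ 16 := by
      calc 16 * (A * B * m * n) = (4 * (A * m)) * (4 * (B * n)) := by ring
        _ ≤ (A + m) ^ 2 * (B + n) ^ 2 := c1
        _ = 16 := c2
    linarith
  linarith

theorem stmt_0 :
    IsGreatest {l : ℝ | ∀ p q r s : ℝ, 0 < p → 0 < q → 0 < r → 0 < s →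
      ∃ z : ℂ, |z.im| ≥ l * |z.re| ∧
        ((p : ℂ) * z ^ 3 + 2 * (q : ℂ) * z ^ 2 + 2 * (r : ℂ) * z + (s : ℂ)) *
          ((q : ℂ) * z ^ 3 + 2 * (p : ℂ) * z ^ 2 + 2 * (s : ℂ) * z + (r : ℂ)) = 0}
      (Real.sqrt 3) := by
  constructor
  · -- membership
    intro p q r s hp hq hr hs
    rcases key p q r s hp hq hr hs with ⟨z, hg, hz⟩ | ⟨A, m, X, hA, hm, hX, hXm, f1, f2, f3⟩
    · exact ⟨z, hg, by rw [hz, zero_mul]⟩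
    rcases key q p s r hq hp hs hr with ⟨z, hg, hz⟩ | ⟨B, n, U, hB, hn, hU, hUn, g1, g2, g3⟩
    · exact ⟨z, hg, by rw [hz, mul_zero]⟩
    exfalso
    apply pure_ineq A m X B n U hA hm hX hB hn hU hXm hUn
    · have h4 : (p * (A + m)) * (q * (B + n)) = (2 * q) * (2 * p) := by rw [f1, g1]
      have hpq : 0 < p * q := mul_pos hp hq
      nlinarith [h4]
    · have h5 : (p * (A * m + X)) * (q * (B * n + U)) = (2 * r) * (2 * s) := by rw [f2, g2]
      have hr' : r = q * (B * U) := g3.symm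
      have hs' : s = p * (A * X) := f3.symm
      have hpq : 0 < p * q := mul_pos hp hq
      nlinarith [h5, hr', hs']
  · -- upper bound
    intro l hl
    obtain ⟨z, hg, heq⟩ := hl 1 1 1 1 one_pos one_pos one_pos one_pos
    have h0 : (z ^ 3 + 2 * z ^ 2 + 2 * z + 1 : ℂ) = 0 := by
      rcases mul_eq_zero.mp heq with h | h <;>
      · push_cast at h
        linear_combination h
    have hfac : (z + 1) * (z ^ 2 + z + 1) = 0 := by linear_combination h0
    rcases mul_eq_zero.mp hfac with h | h
    · have hz : z = -1 := by linear_combination h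
      rw [hz] at hg
      simp at hg
      linarith [Real.sqrt_nonneg 3, hg]
    · have hre : z.re ^ 2 - z.im ^ 2 + z.re + 1 = 0 := by
        have := congrArg Complex.re h
        simpa [pow_two, Complex.mul_re, Complex.mul_im] using this
      have him : z.re * z.im + z.im * z.re + z.im = 0 := by
        have := congrArg Complex.im h
        simpa [pow_two, Complex.mul_re, Complex.mul_im] using this
      have him0 : z.im ≠ 0 := by
        intro h0'
        rw [h0'] at hre
        nlinarith [sq_nonneg (z.re + 1/2), hre]
      have hre2 : z.re = -1/2 := by
        rcases mul_eq_zero.mp (show z.im * (2 * z.re + 1) = 0 by linear_combination him) with h' | h'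
        · exact absurd h' him0
        · linarith
      have him2 : z.im ^ 2 = 3 / 4 := by rw [hre2] at hre; linarith
      have habs : |z.im| = Real.sqrt 3 / 2 := by
        have : |z.im| = Real.sqrt (z.im ^ 2) := (Real.sqrt_sq_eq_abs z.im).symm
        rw [this, him2, show (3:ℝ)/4 = (Real.sqrt 3 / 2)^2 by
          rw [div_pow, Real.sq_sqrt (by norm_num : (0:ℝ) ≤ 3)]; norm_num,
          Real.sqrt_sq (by positivity)]
      have habsre : |z.re| = 1/2 := by rw [hre2]; norm_num
      rw [habs, habsre] at hg
      linarith [hg]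
end

section
/- For all positive real numbers p, q, r, s there exists a complex number z with (p·z³ + 2q·z² + 2r·z + s)·(q·z³ + 2p·z² + 2s·z + r) = 0 and |Im z| ≥ √3·|Re z|. -/
/-!
If `q r ≤ p s` take the cubic `P`, otherwise `Q`: either way we face a cubic
`α z³ + β z² + γ z + δ` with positive coefficients and `β γ ≤ 4 α δ`. It has a negative real
root `x`, hence factors as `α (z - x) (z² + σ z + τ)` over `ℝ`. If `τ < σ²`, comparing
coefficients would give `β γ > 4 α δ`; so `σ² ≤ τ`, and the quadratic factor has the root
`-σ/2 + i √(4τ - σ²)/2`, whose imaginary part is at least `√3` times its real part in size.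
-/

open Complex

theorem exists_neg_root_of_cubic {α δ : ℝ} (β γ : ℝ) (hα : 0 < α) (hδ : 0 < δ) :
    ∃ x < 0, α * x ^ 3 + β * x ^ 2 + γ * x + δ = 0 := by
  set f : ℝ → ℝ := fun x => α * x ^ 3 + β * x ^ 2 + γ * x + δ
  set t := 1 + (|β| + |γ| + δ) / α
  have ht : 1 ≤ t := le_add_of_nonneg_right (by positivity)
  have hαt : α * t = α + (|β| + |γ| + δ) := by
    simp only [t]; field_simp
  have hft : f (-t) < 0 :=
    calc f (-t) ≤ t ^ 2 * (|β| + |γ| + δ - α * t) := by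
          have := le_abs_self β
          have := neg_abs_le γ
          simp only [f]
          nlinarith [mul_le_mul_of_nonneg_left ht (abs_nonneg γ),
            mul_le_mul_of_nonneg_left ht hδ.le]
      _ = -(α * t ^ 2) := by rw [hαt]; ring
      _ < 0 := neg_neg_of_pos (by positivity)
  obtain ⟨x, hx, hfx⟩ : ∃ x ∈ Set.Icc (-t) 0, f x = 0 :=
    intermediate_value_Icc (by linarith) (by fun_prop) ⟨hft.le, by simp [f, hδ.le]⟩
  refine ⟨x, lt_of_le_of_ne hx.2 ?_, hfx⟩
  rintro rfl
  exact hδ.ne' (by simpa [f] using hfx)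

theorem four_mul_lt_of_lt_sq {σ τ v : ℝ} (hv : 0 < v) (hτ : 0 ≤ τ) (hσv : 0 < σ + v)
    (hτσv : 0 < τ + σ * v) (hστ : τ < σ ^ 2) : 4 * τ * v < (σ + v) * (τ + σ * v) := by
  have hσ : 0 < σ := by
    by_contra! hσ
    -- otherwise `τ > -σ v ≥ σ²`
    nlinarith [mul_le_mul_of_nonneg_left (by linarith : -σ ≤ v) (neg_nonneg.2 hσ)]
  rcases le_or_gt (3 * v) σ with h | h
  · nlinarith [mul_nonneg hτ (sub_nonneg.2 h), mul_pos (mul_pos hσ hv) hσv]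
  -- the difference `(σ - 3v) τ + σ³ - 2σ²v + σv²` decreases in `τ` and is `σ (σ - v)²` at `τ = σ²`
  · nlinarith [mul_lt_mul_of_neg_left hστ (by linarith : σ - 3 * v < 0),
      mul_nonneg hσ.le (sq_nonneg (σ - v))]

theorem exists_quadratic_root_abs_im_ge {σ τ : ℝ} (h : σ ^ 2 ≤ τ) :
    ∃ z : ℂ, z ^ 2 + σ * z + τ = 0 ∧ √3 * |z.re| ≤ |z.im| := by
  have hd : 0 ≤ 4 * τ - σ ^ 2 := by nlinarith [sq_nonneg σ]
  set w := √(4 * τ - σ ^ 2)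
  refine ⟨⟨-σ / 2, w / 2⟩, ?_, ?_⟩
  · apply Complex.ext
    · simp only [pow_two, add_re, mul_re, ofReal_re, ofReal_im, zero_mul, sub_zero, zero_re]
      linear_combination (-1 / 4) * Real.mul_self_sqrt hd
    · simp only [pow_two, add_im, mul_im, ofReal_re, ofReal_im, zero_mul, add_zero, zero_im]
      ring
  · rw [abs_div, abs_div, abs_neg, abs_of_nonneg (Real.sqrt_nonneg _), abs_two, mul_div_assoc',
      ← Real.sqrt_sq_eq_abs, ← Real.sqrt_mul (by norm_num)]
    gcongr
    linarith

theorem exists_cubic_root_abs_im_ge {α β γ δ : ℝ} (hα : 0 < α) (hβ : 0 < β) (hγ : 0 < γ)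
    (hδ : 0 < δ) (h : β * γ ≤ 4 * α * δ) :
    ∃ z : ℂ, (α : ℂ) * z ^ 3 + β * z ^ 2 + γ * z + δ = 0 ∧ √3 * |z.re| ≤ |z.im| := by
  obtain ⟨x, hx, hroot⟩ := exists_neg_root_of_cubic β γ hα hδ
  set σ := β / α + x
  set τ := γ / α + σ * x
  have hβ' : β = α * (σ - x) := by simp only [σ]; field_simp; ring
  have hγ' : γ = α * (τ - σ * x) := by simp only [τ]; field_simp; ring
  have hδ' : δ = α * τ * -x := by rw [hβ', hγ'] at hroot; linear_combination hroot
  have hfactor (z : ℂ) :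
      (α : ℂ) * z ^ 3 + β * z ^ 2 + γ * z + δ = α * (z - x) * (z ^ 2 + σ * z + τ) := by
    rw [hβ', hγ', hδ']; push_cast; ring
  have hστ : σ ^ 2 ≤ τ := by
    by_contra! hlt
    have hτ : 0 < τ := by nlinarith [mul_pos hα (neg_pos.2 hx)]
    have := four_mul_lt_of_lt_sq (neg_pos.2 hx) hτ.le (by nlinarith) (by nlinarith) hlt
    have : 4 * α * δ < β * γ :=
      calc 4 * α * δ = α ^ 2 * (4 * τ * -x) := by rw [hδ']; ring
        _ < α ^ 2 * ((σ + -x) * (τ + σ * -x)) := by gcongr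
        _ = β * γ := by rw [hβ', hγ']; ring
    linarith
  obtain ⟨z, hz, hcone⟩ := exists_quadratic_root_abs_im_ge hστ
  exact ⟨z, by rw [hfactor, hz, mul_zero], hcone⟩

theorem stmt_1 (p q r s : ℝ) (hp : 0 < p) (hq : 0 < q) (hr : 0 < r) (hs : 0 < s) :
    ∃ z : ℂ,
      ((p : ℂ) * z ^ 3 + 2 * (q : ℂ) * z ^ 2 + 2 * (r : ℂ) * z + (s : ℂ)) *
        ((q : ℂ) * z ^ 3 + 2 * (p : ℂ) * z ^ 2 + 2 * (s : ℂ) * z + (r : ℂ)) = 0 ∧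
      |z.im| ≥ Real.sqrt 3 * |z.re| := by
  rcases le_total (q * r) (p * s) with h | h
  · obtain ⟨z, hz, hcone⟩ := exists_cubic_root_abs_im_ge hp (by positivity : 0 < 2 * q)
      (by positivity : 0 < 2 * r) hs (by linarith)
    push_cast at hz
    exact ⟨z, by rw [hz, zero_mul], hcone⟩
  · obtain ⟨z, hz, hcone⟩ := exists_cubic_root_abs_im_ge hq (by positivity : 0 < 2 * p)
      (by positivity : 0 < 2 * s) hr (by linarith)
    push_cast at hz
    exact ⟨z, by rw [hz, mul_zero], hcone⟩
end

section
/- Let p, q, r, s, a, λ be real numbers with p > 0, q > 0, r > 0, a > 0 and λ ≠ 0, and suppose the complex number z = a·(1 + λ·i) satisfies p·z³ + 2q·z² + 2r·z + s = 0. Then λ² > 3, i.e., |Im z| > √3·|Re z|. -/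
open Complex

theorem stmt_5 (p q r s a l : ℝ) (hp : 0 < p) (hq : 0 < q) (hr : 0 < r)
    (ha : 0 < a) (hl : l ≠ 0)
    (hz : (p : ℂ) * ((a : ℂ) * (1 + (l : ℂ) * Complex.I)) ^ 3 +
        2 * (q : ℂ) * ((a : ℂ) * (1 + (l : ℂ) * Complex.I)) ^ 2 +
        2 * (r : ℂ) * ((a : ℂ) * (1 + (l : ℂ) * Complex.I)) + (s : ℂ) = 0) :
    l ^ 2 > 3 ∧
      |((a : ℂ) * (1 + (l : ℂ) * Complex.I)).im| >
        Real.sqrt 3 * |((a : ℂ) * (1 + (l : ℂ) * Complex.I)).re| := by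
  have him := congrArg Complex.im hz
  simp [Complex.ext_iff, pow_succ, Complex.add_im, Complex.mul_im, Complex.mul_re] at him
  have key : p * a ^ 3 * (3 - l ^ 2) + 4 * q * a ^ 2 + 2 * r * a = 0 := by
    have h0 : (p * a ^ 3 * (3 - l ^ 2) + 4 * q * a ^ 2 + 2 * r * a) * l = 0 := by
      linear_combination him
    rcases mul_eq_zero.mp h0 with h | h
    · exact h
    · exact absurd h hl
  have hlam : l ^ 2 > 3 := by
    nlinarith [mul_pos hq (mul_pos ha ha), mul_pos hr ha, mul_pos hp (mul_pos ha (mul_pos ha ha))]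
  refine ⟨hlam, ?_⟩
  have hre : ((a : ℂ) * (1 + (l : ℂ) * Complex.I)).re = a := by simp
  have him2 : ((a : ℂ) * (1 + (l : ℂ) * Complex.I)).im = a * l := by simp
  rw [hre, him2, abs_mul, abs_of_pos ha]
  have h3 : Real.sqrt 3 < |l| := by
    have : Real.sqrt 3 < Real.sqrt (l ^ 2) := by
      apply Real.sqrt_lt_sqrt (by norm_num) hlam
    rwa [Real.sqrt_sq_eq_abs] at this
  calc Real.sqrt 3 * a < |l| * a := by nlinarith
    _ = a * |l| := mul_comm _ _
end

section
/- Let p, q, r be positive real numbers and set s = 4·q·r/p. Then the complex polynomial p·z³ + 2q·z² + 2r·z + s factors as (p·z² + 2r)·(z + 2q/p); in particular its roots are z = −2q/p and the purely imaginary numbers z = ± i·√(2r/p), so it has a root z with Re z = 0 and Im z ≠ 0. -/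
open Complex

theorem stmt_6 (p q r : ℝ) (hp : 0 < p) (hq : 0 < q) (hr : 0 < r) :
    (∀ z : ℂ, (p : ℂ) * z ^ 3 + 2 * (q : ℂ) * z ^ 2 + 2 * (r : ℂ) * z +
        (4 * q * r / p : ℝ) = ((p : ℂ) * z ^ 2 + 2 * (r : ℂ)) * (z + 2 * (q : ℂ) / (p : ℂ))) ∧
    (∀ z : ℂ, (p : ℂ) * z ^ 3 + 2 * (q : ℂ) * z ^ 2 + 2 * (r : ℂ) * z +
        (4 * q * r / p : ℝ) = 0 ↔
      z = -(2 * (q : ℂ) / (p : ℂ)) ∨ z = Complex.I * Real.sqrt (2 * r / p) ∨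
        z = -(Complex.I * Real.sqrt (2 * r / p))) ∧
    (∃ z : ℂ, (p : ℂ) * z ^ 3 + 2 * (q : ℂ) * z ^ 2 + 2 * (r : ℂ) * z +
        (4 * q * r / p : ℝ) = 0 ∧ z.re = 0 ∧ z.im ≠ 0) := by
  have hp0 : (p : ℂ) ≠ 0 := by exact_mod_cast hp.ne'
  have ht : (0:ℝ) ≤ 2 * r / p := by positivity
  set w : ℂ := Complex.I * Real.sqrt (2 * r / p) with hw
  have hw2 : (p : ℂ) * w ^ 2 + 2 * (r : ℂ) = 0 := by
    have hs : ((Real.sqrt (2 * r / p) : ℝ) : ℂ) ^ 2 = ((2 * r / p : ℝ) : ℂ) := by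
      norm_cast; exact Real.sq_sqrt ht
    rw [hw, mul_pow, Complex.I_sq]
    rw [hs]
    push_cast
    field_simp
    ring
  have hfac : ∀ z : ℂ, (p : ℂ) * z ^ 3 + 2 * (q : ℂ) * z ^ 2 + 2 * (r : ℂ) * z +
      (4 * q * r / p : ℝ) = ((p : ℂ) * z ^ 2 + 2 * (r : ℂ)) * (z + 2 * (q : ℂ) / (p : ℂ)) := by
    intro z
    push_cast
    field_simp
    ring
  have hquad : ∀ z : ℂ, (p : ℂ) * z ^ 2 + 2 * (r : ℂ) = 0 ↔ z = w ∨ z = -w := by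
    intro z
    constructor
    · intro h
      have h2 : (z - w) * (z + w) = 0 := by
        have : (p : ℂ) * ((z - w) * (z + w)) = 0 := by linear_combination h - hw2
        exact (mul_eq_zero.mp this).resolve_left hp0
      rcases mul_eq_zero.mp h2 with h3 | h3
      · left; exact sub_eq_zero.mp h3
      · right; exact eq_neg_of_add_eq_zero_left h3
    · rintro (rfl | rfl)
      · exact hw2
      · linear_combination hw2
  have hquad' : ∀ z : ℂ, (p : ℂ) * z ^ 2 + 2 * (r : ℂ) = 0 ↔ z = w ∨ z = -w := hquad
  refine ⟨hfac, ?_, ?_⟩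
  · intro z
    rw [hfac z, mul_eq_zero, hquad z, add_eq_zero_iff_eq_neg]
    tauto
  · refine ⟨w, ?_, ?_, ?_⟩
    · rw [hfac w, hw2, zero_mul]
    · simp [hw]
    · simp only [hw, Complex.mul_im, Complex.I_re, Complex.I_im, Complex.ofReal_re,
        Complex.ofReal_im]
      have : Real.sqrt (2 * r / p) ≠ 0 := by positivity
      simpa using this
end

section
/- The number of ordered pairs of positive integers (m, n) with 1 ≤ m ≤ 100 and 1 ≤ n ≤ 100 for which there exists a real number x with 0 < x < 1, x ≠ 1/2, and m·arcsin(x/2) + n·arcsin((1 − x)/2) = π, is equal to 940. -/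
/-!
Write `α = arcsin (x / 2)` and `β = arcsin ((1 - x) / 2)`, so the equation reads `m α + n β = π`.
Since `sin` is concave on `[0, π]`, `arcsin` is superadditive and lies above its tangents on
`[0, 1]`. Superadditivity gives `α + β < arcsin (1 / 2) = π / 6`, so there is no solution when
`m, n ≤ 6`; `arcsin t > t` gives `m α + n β > 7 / 2 > π` when `m, n ≥ 7`. In the remaining case
`m = 6 < n` (up to the symmetry `x ↦ 1 - x`) the tangent at `1 / 2` gives
`6 α ≥ π - 2√3 (1 - x)`, while `n β > 7 (1 - x) / 2`. For `m ≤ 5 < 7 ≤ n` the left side falls from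
`n π / 6 > π` at `x = 0` to `m π / 6 < π` at `x = 1`, and a root is not `1 / 2` because
`π / 13 < arcsin (1 / 4) < π / 12`. So the admissible pairs are those with `min m n ≤ 5` and
`max m n ≥ 7`: `2 · 5 · 94 = 940`.
-/

open Real Set

lemma lt_arcsin_self {t : ℝ} (h0 : 0 < t) (h1 : t ≤ 1) : t < arcsin t := by
  simpa [sin_arcsin (by linarith) h1] using sin_lt (arcsin_pos.2 h0)

lemma arcsin_one_half : arcsin (1 / 2) = π / 6 := by
  rw [← sin_pi_div_six, arcsin_sin] <;> linarith [pi_pos]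

lemma sin_add_lt_sin_add_sin {x y : ℝ} (hx₀ : 0 < x) (hxπ : x < π) (hy₀ : 0 < y) (hyπ : y < π) :
    sin (x + y) < sin x + sin y := by
  have hcx : cos x < 1 := by simpa using cos_lt_cos_of_nonneg_of_le_pi le_rfl hxπ.le hx₀
  have hcy : cos y < 1 := by simpa using cos_lt_cos_of_nonneg_of_le_pi le_rfl hyπ.le hy₀
  rw [sin_add]
  nlinarith [sin_pos_of_pos_of_lt_pi hx₀ hxπ, sin_pos_of_pos_of_lt_pi hy₀ hyπ]

lemma arcsin_add_arcsin_lt_arcsin_add {a b : ℝ} (ha : 0 < a) (hb : 0 < b) (hab : a + b ≤ 1) :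
    arcsin a + arcsin b < arcsin (a + b) := by
  have hsum : arcsin a + arcsin b < π / 2 := by
    have hb' : b < √(1 - a ^ 2) := lt_sqrt hb.le |>.2 (by nlinarith)
    have := arcsin_lt_arcsin (by linarith) hb' (sqrt_le_one.2 (by nlinarith))
    rw [← arccos_eq_arcsin ha.le, arccos_eq_pi_div_two_sub_arcsin] at this
    linarith
  rw [lt_arcsin_iff_sin_lt' ⟨by linarith [arcsin_pos.2 ha, arcsin_pos.2 hb], hsum⟩]
  calc sin (arcsin a + arcsin b) < sin (arcsin a) + sin (arcsin b) :=
        sin_add_lt_sin_add_sin (arcsin_pos.2 ha) (by linarith [arcsin_pos.2 hb, pi_pos])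
          (arcsin_pos.2 hb) (by linarith [arcsin_pos.2 ha, pi_pos])
    _ = a + b := by
        rw [sin_arcsin (by linarith) (by linarith), sin_arcsin (by linarith) (by linarith)]

lemma sin_le_sin_add_cos_mul_sub {x y : ℝ} (hx : x ∈ Icc 0 π) (hy : y ∈ Icc 0 π) :
    sin y ≤ sin x + cos x * (y - x) := by
  rcases lt_trichotomy y x with hyx | rfl | hxy
  · have := strictConcaveOn_sin_Icc.concaveOn.le_slope_of_hasDerivAt hy hx hyx (hasDerivAt_sin x)
    rw [slope_def_field, le_div_iff₀ (by linarith)] at this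
    linarith
  · simp
  · have := strictConcaveOn_sin_Icc.concaveOn.slope_le_of_hasDerivAt hx hy hxy (hasDerivAt_sin x)
    rw [slope_def_field, div_le_iff₀ (by linarith)] at this
    linarith

lemma arcsin_add_div_sqrt_le_arcsin {s t : ℝ} (hs : s ∈ Ico 0 1) (ht : t ∈ Icc 0 1) :
    arcsin s + (t - s) / √(1 - s ^ 2) ≤ arcsin t := by
  have hsq : 0 < √(1 - s ^ 2) := sqrt_pos.2 (by nlinarith [hs.1, hs.2])
  have mem : ∀ u ∈ Icc (0 : ℝ) 1, arcsin u ∈ Icc 0 π := fun u hu =>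
    ⟨arcsin_nonneg.2 hu.1, (arcsin_le_pi_div_two u).trans (by linarith [pi_pos])⟩
  have := sin_le_sin_add_cos_mul_sub (mem s (Ico_subset_Icc_self hs)) (mem t ht)
  rw [sin_arcsin (by linarith [ht.1]) ht.2, sin_arcsin (by linarith [hs.1]) hs.2.le,
    cos_arcsin] at this
  have : (t - s) / √(1 - s ^ 2) ≤ arcsin t - arcsin s := by
    rw [div_le_iff₀ hsq]
    linarith
  linarith

lemma pi_div_six_sub_le_arcsin {t : ℝ} (ht : t ∈ Icc 0 1) :
    π / 6 - 2 / √3 * (1 / 2 - t) ≤ arcsin t := by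
  have h := arcsin_add_div_sqrt_le_arcsin (s := 1 / 2) ⟨by norm_num, by norm_num⟩ ht
  have h3 : √(1 - (1 / 2 : ℝ) ^ 2) = √3 / 2 := by
    rw [show (1 - (1 / 2 : ℝ) ^ 2) = 3 / 2 ^ 2 by norm_num, sqrt_div' _ (by norm_num),
      sqrt_sq (by norm_num)]
  rw [arcsin_one_half, h3] at h
  convert h using 2
  field_simp
  ring

lemma arcsin_one_quarter_lt : arcsin (1 / 4) < π / 12 := by
  have hsin : 1 / 4 < sin (π / 12) := by
    have hcube : (π / 12) ^ 3 < (1 / 3) ^ 3 :=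
      pow_lt_pow_left₀ (by linarith [pi_lt_d2]) (by positivity) (by norm_num)
    linarith [sin_gt_sub_cube (x := π / 12) (by positivity), pi_gt_d2]
  rw [arcsin_lt_iff_lt_sin' ⟨by linarith [pi_pos], by linarith [pi_pos]⟩]
  exact hsin

-- Half the total central angle of the polygon with sides `a, b` on the circle of radius `a + b`,
-- where `x = a / (a + b)`.
noncomputable def halfAngleSum (m n : ℕ) (x : ℝ) : ℝ :=
  m * arcsin (x / 2) + n * arcsin ((1 - x) / 2)

lemma halfAngleSum_one_sub (m n : ℕ) (x : ℝ) : halfAngleSum m n (1 - x) = halfAngleSum n m x := by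
  simp only [halfAngleSum, sub_sub_cancel]
  ring

section

variable {m n : ℕ} {x : ℝ}

lemma halfAngleSum_lt_pi (hm : m ≤ 6) (hn : n ≤ 6) (hx : x ∈ Ioo 0 1) :
    halfAngleSum m n x < π := by
  have hα : 0 ≤ arcsin (x / 2) := arcsin_nonneg.2 (by linarith [hx.1])
  have hβ : 0 ≤ arcsin ((1 - x) / 2) := arcsin_nonneg.2 (by linarith [hx.2])
  have hsum : arcsin (x / 2) + arcsin ((1 - x) / 2) < π / 6 := by
    rw [← arcsin_one_half]
    convert arcsin_add_arcsin_lt_arcsin_add (a := x / 2) (b := (1 - x) / 2)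
      (by linarith [hx.1]) (by linarith [hx.2]) (by linarith) using 2
    ring
  have hm' : (m : ℝ) ≤ 6 := by exact_mod_cast hm
  have hn' : (n : ℝ) ≤ 6 := by exact_mod_cast hn
  unfold halfAngleSum
  nlinarith [mul_le_mul_of_nonneg_right hm' hα, mul_le_mul_of_nonneg_right hn' hβ]

lemma pi_lt_halfAngleSum_of_seven_le (hm : 7 ≤ m) (hn : 7 ≤ n) (hx : x ∈ Ioo 0 1) :
    π < halfAngleSum m n x := by
  have hα : x / 2 < arcsin (x / 2) := lt_arcsin_self (by linarith [hx.1]) (by linarith [hx.2])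
  have hβ : (1 - x) / 2 < arcsin ((1 - x) / 2) :=
    lt_arcsin_self (by linarith [hx.2]) (by linarith [hx.1])
  have hm' : (7 : ℝ) ≤ m := by exact_mod_cast hm
  have hn' : (7 : ℝ) ≤ n := by exact_mod_cast hn
  unfold halfAngleSum
  nlinarith [pi_lt_d2, hx.1, hx.2]

lemma pi_lt_halfAngleSum_six (hn : 7 ≤ n) (hx : x ∈ Ioo 0 1) : π < halfAngleSum 6 n x := by
  have hα := pi_div_six_sub_le_arcsin (t := x / 2) ⟨by linarith [hx.1], by linarith [hx.2]⟩
  have hβ : (1 - x) / 2 < arcsin ((1 - x) / 2) :=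
    lt_arcsin_self (by linarith [hx.2]) (by linarith [hx.1])
  have hn' : (7 : ℝ) ≤ n := by exact_mod_cast hn
  -- `6 · 2/√3 = 2√3 < 7/2` because `48 < 49`
  have h3 : 2 / √3 * 6 < 7 := by
    rw [div_mul_eq_mul_div, div_lt_iff₀ (by positivity)]
    nlinarith [sq_sqrt (show (0 : ℝ) ≤ 3 by norm_num), sqrt_nonneg 3]
  unfold halfAngleSum
  push_cast
  nlinarith [hx.1, hx.2]

lemma halfAngleSum_ne_pi (h : ¬((m ≤ 5 ∧ 7 ≤ n) ∨ (n ≤ 5 ∧ 7 ≤ m))) (hx : x ∈ Ioo 0 1) :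
    halfAngleSum m n x ≠ π := by
  have hx' : 1 - x ∈ Ioo 0 1 := ⟨by linarith [hx.2], by linarith [hx.1]⟩
  rcases le_or_gt m 6 with hm | hm <;> rcases le_or_gt n 6 with hn | hn
  · exact (halfAngleSum_lt_pi hm hn hx).ne
  · obtain rfl : m = 6 := by omega
    exact (pi_lt_halfAngleSum_six hn hx).ne'
  · obtain rfl : n = 6 := by omega
    rw [← sub_sub_cancel 1 x, halfAngleSum_one_sub]
    exact (pi_lt_halfAngleSum_six hm hx').ne'
  · exact (pi_lt_halfAngleSum_of_seven_le hm hn hx).ne'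

lemma natCast_mul_arcsin_one_quarter_ne_pi (k : ℕ) : k * arcsin (1 / 4) ≠ π := by
  have hlt := arcsin_one_quarter_lt
  have hgt : 1 / 4 < arcsin (1 / 4) := lt_arcsin_self (by norm_num) (by norm_num)
  rcases le_or_gt k 12 with hk | hk
  · have hk' : (k : ℝ) ≤ 12 := by exact_mod_cast hk
    nlinarith
  · have hk' : (13 : ℝ) ≤ k := by exact_mod_cast hk
    nlinarith [pi_lt_d2]

lemma halfAngleSum_one_half (m n : ℕ) :
    halfAngleSum m n (1 / 2) = ((m + n : ℕ) : ℝ) * arcsin (1 / 4) := by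
  norm_num [halfAngleSum]
  ring

lemma halfAngleSum_one_half_ne_pi (m n : ℕ) : halfAngleSum m n (1 / 2) ≠ π :=
  halfAngleSum_one_half m n ▸ natCast_mul_arcsin_one_quarter_ne_pi (m + n)

lemma exists_halfAngleSum_eq_pi (hm : m ≤ 5) (hn : 7 ≤ n) :
    ∃ x ∈ Ioo 0 1, halfAngleSum m n x = π := by
  have hcont : ContinuousOn (halfAngleSum m n) (Icc 0 1) := by
    unfold halfAngleSum
    fun_prop
  have hm' : (m : ℝ) ≤ 5 := by exact_mod_cast hm
  have hn' : (7 : ℝ) ≤ n := by exact_mod_cast hn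
  have h1 : halfAngleSum m n 1 = m * (π / 6) := by
    rw [halfAngleSum, sub_self, zero_div, arcsin_zero, mul_zero, add_zero, arcsin_one_half]
  have h0 : halfAngleSum m n 0 = n * (π / 6) := by
    rw [halfAngleSum, zero_div, arcsin_zero, sub_zero, mul_zero, zero_add, arcsin_one_half]
  exact intermediate_value_Ioo' zero_le_one hcont
    ⟨by rw [h1]; nlinarith [pi_pos], by rw [h0]; nlinarith [pi_pos]⟩

lemma exists_halfAngleSum_eq_pi_iff (m n : ℕ) :
    (∃ x : ℝ, 0 < x ∧ x < 1 ∧ x ≠ 1 / 2 ∧ halfAngleSum m n x = π) ↔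
      (m ≤ 5 ∧ 7 ≤ n) ∨ (n ≤ 5 ∧ 7 ≤ m) := by
  constructor
  · rintro ⟨x, hx₀, hx₁, -, hx⟩
    by_contra h
    exact halfAngleSum_ne_pi h ⟨hx₀, hx₁⟩ hx
  · rintro (⟨hm, hn⟩ | ⟨hn, hm⟩)
    · obtain ⟨x, hx, hsum⟩ := exists_halfAngleSum_eq_pi hm hn
      exact ⟨x, hx.1, hx.2, by rintro rfl; exact halfAngleSum_one_half_ne_pi m n hsum, hsum⟩
    · obtain ⟨x, hx, hsum⟩ := exists_halfAngleSum_eq_pi hn hm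
      refine ⟨1 - x, by linarith [hx.2], by linarith [hx.1], fun h => ?_,
        by rwa [halfAngleSum_one_sub]⟩
      obtain rfl : x = 1 / 2 := by linarith
      exact halfAngleSum_one_half_ne_pi n m hsum

end

open scoped Classical in
theorem stmt_7 :
    Finset.card ((Finset.Icc 1 100 ×ˢ Finset.Icc 1 100).filter
      (fun mn : ℕ × ℕ => ∃ x : ℝ, 0 < x ∧ x < 1 ∧ x ≠ 1 / 2 ∧
        (mn.1 : ℝ) * Real.arcsin (x / 2) + (mn.2 : ℝ) * Real.arcsin ((1 - x) / 2) =
          Real.pi)) = 940 := by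
  refine (congrArg Finset.card
    (a₂ := Finset.Icc 1 5 ×ˢ Finset.Icc 7 100 ∪ Finset.Icc 7 100 ×ˢ Finset.Icc 1 5) ?_).trans ?_
  · ext ⟨m, n⟩
    simp only [Finset.mem_filter, Finset.mem_product, Finset.mem_union, Finset.mem_Icc]
    change _ ∧ (∃ x : ℝ, 0 < x ∧ x < 1 ∧ x ≠ 1 / 2 ∧ halfAngleSum m n x = π) ↔ _
    rw [exists_halfAngleSum_eq_pi_iff]
    omega
  · rw [Finset.card_union_of_disjoint, Finset.card_product, Finset.card_product, Nat.card_Icc,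
      Nat.card_Icc]
    simp only [Finset.disjoint_left, Finset.mem_product, Finset.mem_Icc]
    omega
end

section
/- Let A, B, C be three affinely independent points in the Euclidean plane forming an acute triangle (each of the angles ∠BAC, ∠ABC, ∠BCA is strictly less than π/2). Let O be the circumcenter of triangle ABC and let M be the midpoint of segment BC. Let P be a point such that ∠BAP = ∠CAM, ∠CAP = ∠BAM, and ∠APO = π/2. If dist(A, O) = 53, dist(O, M) = 28, and dist(A, M) = 75, then the perimeter of triangle BPC satisfies dist(B, P) + dist(P, C) + dist(C, B) = 192. -/
private lemma sqrt_eq' (x v : ℝ) (hx : 0 ≤ x) (hv : 0 ≤ v) (h : x^2 = v^2) : x = v := by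
  have h0 : (x - v)*(x + v) = 0 := by linear_combination h
  rcases mul_eq_zero.mp h0 with h1 | h1
  · linarith
  · have hx0 : x = 0 := by linarith
    have hv0 : v = 0 := by linarith
    rw [hx0, hv0]

private lemma pos_root (x v : ℝ) (hx : 0 < x) (h : x*(x - v) = 0) : x = v := by
  rcases mul_eq_zero.mp h with h1 | h1
  · exact absurd h1 hx.ne'
  · linarith

private lemma qr_pos (q r : ℝ) (hq : q = 3600) (hr : 0 < r) : q + r ≠ 0 := by
  rw [hq]; linarith

set_option maxHeartbeats 1000000 in
private lemma scalar_main (p q r a₁ b₁ g d X Y t b c BP PC CB : ℝ)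
    (hr : 0 < r) (hb : 0 < b) (hc : 0 < c) (ht0 : 0 ≤ t)
    (hBP0 : 0 ≤ BP) (hPC0 : 0 ≤ PC) (hCB0 : 0 ≤ CB)
    (hc2 : c ^ 2 = p) (hb2 : b ^ 2 = r)
    (hXdef : X = g*p + d*q) (hYdef : Y = g*q + d*r)
    (H1 : a₁^2*p + 2*a₁*b₁*q + b₁^2*r = 2809)
    (H2 : a₁*p + b₁*q = p/2)
    (H3 : a₁*q + b₁*r = r/2)
    (H4 : p + 2*q + r = 22500)
    (H5 : (a₁-1/2)^2*p + 2*(a₁-1/2)*(b₁-1/2)*q + (b₁-1/2)^2*r = 784)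
    (hT : t = 0 → q + r = 0)
    (E1 : X / (c*t) = (1/2*q + 1/2*r) / (b*75))
    (E2 : Y / (b*t) = (1/2*p + 1/2*q) / (c*75))
    (ht2 : t^2 = g^2*p + 2*g*d*q + d^2*r)
    (H7 : g^2*p + 2*g*d*q + d^2*r = g*a₁*p + (g*b₁ + d*a₁)*q + d*b₁*r)
    (hBP2 : BP^2 = p + t^2 - 2*X)
    (hPC2 : PC^2 = r + t^2 - 2*Y)
    (hCB2 : CB^2 = p - 2*q + r) :
    BP + PC + CB = 192 := by
  have h15300 : p + r = 15300 := by
    linear_combination (-2)*H5 + 2*H1 - 2*H2 - 2*H3 + (1/2)*H4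
  have hq : q = 3600 := by linear_combination (1/2)*H4 - (1/2)*h15300
  have ht : 0 < t := ht0.lt_of_ne' (fun h => qr_pos q r hq hr (hT h))
  have E1' : X * (b*75) = (1/2*q + 1/2*r) * (c*t) :=
    (div_eq_div_iff (by positivity) (by positivity)).mp E1
  have E2' : Y * (c*75) = (1/2*p + 1/2*q) * (b*t) :=
    (div_eq_div_iff (by positivity) (by positivity)).mp E2
  -- determine p*r
  have aD : a₁*(p*r - q^2) = r*(p-q)/2 := by linear_combination r*H2 - q*H3
  have bD : b₁*(p*r - q^2) = p*(r-q)/2 := by linear_combination p*H3 - q*H2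
  have h5618 : a₁*p + b₁*r = 5618 := by linear_combination 2*H1 - 2*a₁*H2 - 2*b₁*H3
  have E : 5618*(p*r - q^2) = (p*r)*((p+r) - 2*q)/2 := by
    linear_combination p*aD + r*bD - (p*r - q^2)*h5618
  rw [hq, h15300] at E
  have hpr : p*r = 2275290000/49 := by linear_combination (1/1568)*E
  have hD : p*r - q^2 = 1640250000/49 := by rw [hpr, hq]; norm_num
  have gD : g*(p*r - q^2) = X*r - Y*q := by linear_combination (-r)*hXdef + q*hYdef
  have dD : d*(p*r - q^2) = Y*p - X*q := by linear_combination (-p)*hYdef + q*hXdef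
  have h2t : g*p + d*r = 2*t^2 := by
    linear_combination (-2)*ht2 + (-2)*H7 + (-2*g)*H2 + (-2*d)*H3
  have tD : 2*t^2*(p*r - q^2) = (p*r)*(X + Y) - q*(r*X + p*Y) := by
    linear_combination p*gD + r*dD - (p*r - q^2)*h2t
  have hrX : 150*(r*X) = (b*c)*t*(q+r) := by
    linear_combination 2*b*E1' - 150*X*hb2
  have hpY : 150*(p*Y) = (b*c)*t*(p+q) := by
    linear_combination 2*c*E2' - 150*Y*hc2
  have hbc2 : (b*c)^2 = 2275290000/49 := by linear_combination c^2*hb2 + r*hc2 + hpr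
  have hbc : b*c = 47700/7 :=
    sqrt_eq' (b*c) (47700/7) (by positivity) (by norm_num) (by rw [hbc2]; norm_num)
  have step : 300*t^2*(p*r - q^2) = 2*(b*c)*t*(p*r - q^2) := by
    linear_combination 150*tD + (p-q)*hrX + (r-q)*hpY
  rw [hD, hbc] at step
  have ht318 : t = 318/7 :=
    pos_root t (318/7) ht (by linear_combination (49/492075000000)*step)
  have sum1 : (p*r)*(X + Y) = (b*c)*t*(2*(p*r) + q*(p+r))/150 := by
    linear_combination (p/150)*hrX + (r/150)*hpY
  rw [hbc, ht318, hpr, hq, h15300] at sum1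
  have hXY : X + Y = 322200/49 := by linear_combination (49/2275290000)*sum1
  have sumrXpY : 150*(r*X + p*Y) = (b*c)*t*(p + 2*q + r) := by
    linear_combination hrX + hpY
  rw [hbc, ht318, H4] at sumrXpY
  have hrXpY : r*X + p*Y = 2275290000/49 := by linear_combination (1/150)*sumrXpY
  have prod1 : 22500*((p*r)*(X*Y)) = ((b*c)*t)^2*((p*r) + q*(p+r) + q^2) := by
    linear_combination ((b*c)*t*(p+q))*hrX + (150*(r*X))*hpY
  rw [hbc, ht318, hpr, hq, h15300] at prod1
  have hXYp : X*Y = 25210213200/2401 := by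
    linear_combination (49/(22500*2275290000))*prod1
  rw [ht318] at hBP2 hPC2
  have hS : BP^2 + PC^2 = 307548/49 := by
    linear_combination hBP2 + hPC2 + h15300 - 2*hXY
  have hQ1 : (BP*PC)^2 = (p + (318/7)^2 - 2*X)*(r + (318/7)^2 - 2*Y) := by
    rw [show (BP*PC)^2 = BP^2*PC^2 from by ring, hBP2, hPC2]
  have hQ : (BP*PC)^2 = (101124/49)^2 := by
    linear_combination hQ1 + hpr + (318/7)^2*h15300 - 2*hrXpY - 2*(318/7)^2*hXY + 4*hXYp
  have hBPPC : BP*PC = 101124/49 :=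
    sqrt_eq' (BP*PC) (101124/49) (mul_nonneg hBP0 hPC0) (by norm_num) hQ
  have hBPPCsum : BP + PC = 102 :=
    sqrt_eq' (BP + PC) 102 (by linarith) (by norm_num)
      (by linear_combination hS + 2*hBPPC)
  have hCB : CB = 90 :=
    sqrt_eq' CB 90 hCB0 (by norm_num)
      (by linear_combination hCB2 + h15300 - 2*hq)
  linarith

open EuclideanGeometry RealInnerProductSpace

theorem stmt_8 (A B C O M P : EuclideanSpace ℝ (Fin 2))
    (hABC : AffineIndependent ℝ ![A, B, C])
    (hacuteA : ∠ B A C < Real.pi / 2)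
    (hacuteB : ∠ A B C < Real.pi / 2)
    (hacuteC : ∠ B C A < Real.pi / 2)
    (hO₁ : dist O A = dist O B) (hO₂ : dist O B = dist O C)
    (hM : M = midpoint ℝ B C)
    (hP₁ : ∠ B A P = ∠ C A M)
    (hP₂ : ∠ C A P = ∠ B A M)
    (hP₃ : ∠ A P O = Real.pi / 2)
    (hAO : dist A O = 53) (hOM : dist O M = 28) (hAM : dist A M = 75) :
    dist B P + dist P C + dist C B = 192 := by
  -- nondegeneracy
  have hBA : B ≠ A := by
    intro h
    have h2 : ![A, B, C] 1 = ![A, B, C] 0 := by simpa using h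
    simpa using hABC.injective h2
  have hCA : C ≠ A := by
    intro h
    have h2 : ![A, B, C] 2 = ![A, B, C] 0 := by simpa using h
    simpa using hABC.injective h2
  -- linear independence of the edge vectors
  have hli : LinearIndependent ℝ ![B - A, C - A] := by
    rw [linearIndependent_fin2]
    constructor
    · simpa using sub_ne_zero_of_ne hCA
    · intro s hs
      simp only [Matrix.cons_val_one, Matrix.head_cons, Matrix.cons_val_zero] at hs
      apply affineIndependent_iff_not_collinear.mp hABC
      rw [show Set.range ![A, B, C] = {A, B, C} by
        simp only [Matrix.range_cons, Matrix.range_empty, Set.union_empty,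
          Set.union_singleton, Set.union_insert]
        ext x
        simp [or_comm, or_assoc, or_left_comm]]
      refine (collinear_iff_of_mem (Set.mem_insert A {B, C})).mpr ⟨C - A, fun x hx => ?_⟩
      simp only [Set.mem_insert_iff, Set.mem_singleton_iff] at hx
      rcases hx with rfl | rfl | rfl
      · exact ⟨0, by simp⟩
      · exact ⟨s, by rw [hs]; simp⟩
      · exact ⟨1, by simp⟩
  have hspan : Submodule.span ℝ (Set.range ![B - A, C - A]) = ⊤ :=
    hli.span_eq_top_of_card_eq_finrank (by simp)
  have hmem : ∀ z : EuclideanSpace ℝ (Fin 2), ∃ s u : ℝ, z = s • (B - A) + u • (C - A) := by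
    intro z
    have hz : z ∈ Submodule.span ℝ ({B - A, C - A} : Set (EuclideanSpace ℝ (Fin 2))) := by
      have hrange : (Set.range ![B - A, C - A]) = {B - A, C - A} := by
        simp [Matrix.range_cons, Matrix.range_empty, Set.pair_comm]
      rw [← hrange, hspan]; trivial
    obtain ⟨s, u, h⟩ := Submodule.mem_span_pair.mp hz
    exact ⟨s, u, h.symm⟩
  obtain ⟨a₁, b₁, ho⟩ := hmem (O - A)
  obtain ⟨g, d, hw⟩ := hmem (P - A)
  -- inner product abbreviations and expansion lemmas
  have hvu : ⟪C - A, B - A⟫ = ⟪B - A, C - A⟫ := real_inner_comm _ _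
  have hexp : ∀ s₁ s₂ s₃ s₄ : ℝ,
      ⟪s₁ • (B - A) + s₂ • (C - A), s₃ • (B - A) + s₄ • (C - A)⟫
        = (s₁*s₃) * ⟪B - A, B - A⟫ + (s₁*s₄ + s₂*s₃) * ⟪B - A, C - A⟫
          + (s₂*s₄) * ⟪C - A, C - A⟫ := by
    intro s₁ s₂ s₃ s₄
    simp only [inner_add_left, inner_add_right, real_inner_smul_left, real_inner_smul_right, hvu]
    ring
  have hexpL : ∀ s₃ s₄ : ℝ, ⟪B - A, s₃ • (B - A) + s₄ • (C - A)⟫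
      = s₃ * ⟪B - A, B - A⟫ + s₄ * ⟪B - A, C - A⟫ := by
    intro s₃ s₄
    simp only [inner_add_right, real_inner_smul_right]
  have hexpR : ∀ s₃ s₄ : ℝ, ⟪C - A, s₃ • (B - A) + s₄ • (C - A)⟫
      = s₃ * ⟪B - A, C - A⟫ + s₄ * ⟪C - A, C - A⟫ := by
    intro s₃ s₄
    simp only [inner_add_right, real_inner_smul_right, hvu]
  have dsq : ∀ X Y : EuclideanSpace ℝ (Fin 2), ⟪X - Y, X - Y⟫ = dist X Y ^ 2 := by
    intro X Y; rw [dist_eq_norm, real_inner_self_eq_norm_sq]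
  -- midpoint
  have hm : M - A = (1/2 : ℝ) • (B - A) + (1/2 : ℝ) • (C - A) := by
    rw [hM, midpoint_eq_smul_add, invOf_eq_inv]
    module
  -- distance facts as scalar equations
  have e1 : ⟪O - A, O - A⟫ = dist O A ^ 2 := dsq O A
  rw [ho, hexp, dist_comm, hAO] at e1
  have hOB : dist O B = 53 := by rw [← hO₁, dist_comm]; exact hAO
  have hOC : dist O C = 53 := by rw [← hO₂]; exact hOB
  have hOBv : O - B = (a₁ - 1) • (B - A) + b₁ • (C - A) := by
    rw [show O - B = (O - A) - (B - A) from by abel, ho]; module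
  have hOCv : O - C = a₁ • (B - A) + (b₁ - 1) • (C - A) := by
    rw [show O - C = (O - A) - (C - A) from by abel, ho]; module
  have e2 : ⟪O - B, O - B⟫ = dist O B ^ 2 := dsq O B
  rw [hOBv, hexp, hOB] at e2
  have e3 : ⟪O - C, O - C⟫ = dist O C ^ 2 := dsq O C
  rw [hOCv, hexp, hOC] at e3
  have e4 : ⟪M - A, M - A⟫ = dist M A ^ 2 := dsq M A
  rw [hm, hexp, dist_comm, hAM] at e4
  have hOMv : O - M = (a₁ - 1/2) • (B - A) + (b₁ - 1/2) • (C - A) := by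
    rw [show O - M = (O - A) - (M - A) from by abel, ho, hm]; module
  have e5 : ⟪O - M, O - M⟫ = dist O M ^ 2 := dsq O M
  rw [hOMv, hexp, hOM] at e5
  -- norms
  have hnB : ‖B - A‖ = dist A B := by rw [dist_comm, dist_eq_norm]
  have hnC : ‖C - A‖ = dist A C := by rw [dist_comm, dist_eq_norm]
  have hnP : ‖P - A‖ = dist A P := by rw [dist_comm, dist_eq_norm]
  have hnM : ‖M - A‖ = dist A M := by rw [dist_comm, dist_eq_norm]
  -- cosine equations
  have ec1 := congrArg Real.cos hP₁
  have ec2 := congrArg Real.cos hP₂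
  have hang : ∀ X Z : EuclideanSpace ℝ (Fin 2),
      ∠ X A Z = InnerProductGeometry.angle (X - A) (Z - A) := fun _ _ => rfl
  rw [hang B P, hang C M, InnerProductGeometry.cos_angle, InnerProductGeometry.cos_angle,
    hnB, hnC, hnP, hnM, hAM, hm, hexpR, hw, hexpL] at ec1
  rw [hang C P, hang B M, InnerProductGeometry.cos_angle, InnerProductGeometry.cos_angle,
    hnB, hnC, hnP, hnM, hAM, hm, hexpL, hw, hexpR] at ec2
  -- t = 0 implies degenerate
  have hb : 0 < dist A C := dist_pos.mpr (Ne.symm hCA)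
  have hc : 0 < dist A B := dist_pos.mpr (Ne.symm hBA)
  have hT : dist A P = 0 → ⟪B - A, C - A⟫ + ⟪C - A, C - A⟫ = 0 := by
    intro h0
    have hPA : P = A := (dist_eq_zero.mp h0).symm
    have hw0 : g • (B - A) + d • (C - A) = 0 := by rw [← hw, hPA, sub_self]
    have hX0 : g * ⟪B - A, B - A⟫ + d * ⟪B - A, C - A⟫ = 0 := by
      rw [← hexpL g d, hw0, inner_zero_right]
    rw [hX0, zero_div] at ec1
    rcases div_eq_zero_iff.mp ec1.symm with h1 | h1
    · linarith
    · exact absurd h1 (by positivity)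
  -- perpendicularity at P
  have hperp : ⟪A - P, O - P⟫ = 0 := by
    rw [InnerProductGeometry.inner_eq_zero_iff_angle_eq_pi_div_two]
    exact hP₃
  have hAPv : A - P = (-g) • (B - A) + (-d) • (C - A) := by
    rw [show A - P = -(P - A) from by abel, hw]; module
  have hOPv : O - P = (a₁ - g) • (B - A) + (b₁ - d) • (C - A) := by
    rw [show O - P = (O - A) - (P - A) from by abel, ho, hw]; module
  rw [hAPv, hOPv, hexp] at hperp
  -- |AP|^2
  have et : ⟪P - A, P - A⟫ = dist P A ^ 2 := dsq P A
  rw [hw, hexp] at et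
  have ht2 : dist A P ^ 2 = g^2 * ⟪B - A, B - A⟫ + 2*g*d * ⟪B - A, C - A⟫
      + d^2 * ⟪C - A, C - A⟫ := by
    rw [dist_comm]; linear_combination -et
  -- squared lengths of the sides of BPC
  have hBPv : B - P = (1 - g) • (B - A) + (-d) • (C - A) := by
    rw [show B - P = (B - A) - (P - A) from by abel, hw]; module
  have eBP : ⟪B - P, B - P⟫ = dist B P ^ 2 := dsq B P
  rw [hBPv, hexp] at eBP
  have hPCv : P - C = g • (B - A) + (d - 1) • (C - A) := by
    rw [show P - C = (P - A) - (C - A) from by abel, hw]; module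
  have ePC : ⟪P - C, P - C⟫ = dist P C ^ 2 := dsq P C
  rw [hPCv, hexp] at ePC
  have hCBv : C - B = (-1 : ℝ) • (B - A) + (1 : ℝ) • (C - A) := by module
  have eCB : ⟪C - B, C - B⟫ = dist C B ^ 2 := dsq C B
  rw [hCBv, hexp] at eCB
  -- positivity
  have hrr : 0 < ⟪C - A, C - A⟫ := by rw [real_inner_self_eq_norm_sq]; exact pow_pos (norm_pos_iff.mpr (sub_ne_zero_of_ne hCA)) 2
  -- apply the scalar lemma
  exact scalar_main ⟪B - A, B - A⟫ ⟪B - A, C - A⟫ ⟪C - A, C - A⟫ a₁ b₁ g d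
    (g * ⟪B - A, B - A⟫ + d * ⟪B - A, C - A⟫)
    (g * ⟪B - A, C - A⟫ + d * ⟪C - A, C - A⟫)
    (dist A P) (dist A C) (dist A B) (dist B P) (dist P C) (dist C B)
    hrr hb hc dist_nonneg dist_nonneg dist_nonneg dist_nonneg
    (by rw [dist_comm, dist_eq_norm, real_inner_self_eq_norm_sq])
    (by rw [dist_comm, dist_eq_norm, real_inner_self_eq_norm_sq])
    (by ring) (by ring)
    (by linear_combination e1)
    (by linear_combination (1/2) * (by linear_combination e1 : (a₁^2*⟪B - A, B - A⟫
        + 2*a₁*b₁*⟪B - A, C - A⟫ + b₁^2*⟪C - A, C - A⟫) = 2809) - (1/2)*e2)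
    (by linear_combination (1/2) * (by linear_combination e1 : (a₁^2*⟪B - A, B - A⟫
        + 2*a₁*b₁*⟪B - A, C - A⟫ + b₁^2*⟪C - A, C - A⟫) = 2809) - (1/2)*e3)
    (by linear_combination 4*e4)
    (by linear_combination e5)
    hT
    (by linear_combination ec1)
    (by linear_combination ec2)
    (by linear_combination ht2)
    (by linear_combination hperp)
    (by linear_combination -eBP - ht2)
    (by linear_combination -ePC - ht2)
    (by linear_combination -eCB)
end
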